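/- arXiv:2506.20276 — 2 statements merged into one kernel-verified Lean document; each statement's English description precedes it below -/
import Mathlib

section
/- Let (g,B,S) be a quadratic Rota–Baxter Lie algebra of nonzero weight λ over a field. On the direct product Lie algebra g × g define B̂(u,x) := (Bu − (B+λ·id)x, Bu − (B+λ·id)x) and Ŝ((u,x),(v,y)) := S(u,v) − S(x,y). Then (g × g, B̂, Ŝ) is a quadratic Rota–Baxter Lie algebra of weight λ: Ŝ is nondegenerate, symmetric and invariant, and Ŝ(B̂a,b) + Ŝ(a,B̂b) + λŜ(a,b) = 0 for all a,b ∈ g × g; moreover the swap map τ(u,x) := (x,u) is a reflection on (g × g, B̂, Ŝ). -/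
def prodBracket {K : Type*} [Field K] {g : Type*} [LieRing g] [LieAlgebra K g]
    (a b : g × g) : g × g :=
  (⁅a.1, b.1⁆, ⁅a.2, b.2⁆)

/-!
Put `C := -B - lam • id`. Then `C` is again a Rota–Baxter operator of weight `lam`, and the
mixed brackets split as `⁅B x, C y⁆ = B ⁅x, C y⁆ + C ⁅B x, y⁆`. The operator `B̂` is the diagonal
of `R (u, x) = B u + C x`, and expanding `⁅R a, R b⁆` bilinearly with these identities gives the
Rota–Baxter identity for `B̂`. The compatibility of `S` and `B` says that `C` is the `S`-adjoint
of `B`, which makes `R` compatible with `Ŝ`. Finally `τ` fixes the diagonal, which contains the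
images of both `B̂` and `τ + id`.
-/

section DoubleConstruction

variable {K L : Type*} [CommRing K] [LieRing L] [LieAlgebra K L]

def IsRotaBaxter (B : L →ₗ[K] L) (lam : K) : Prop :=
  ∀ x y : L, ⁅B x, B y⁆ = B (⁅B x, y⁆ + ⁅x, B y⁆ + lam • ⁅x, y⁆)

namespace IsRotaBaxter

variable {B C : L →ₗ[K] L} {lam : K}

theorem complement (hB : IsRotaBaxter B lam) (hC : ∀ x, C x = -(B x + lam • x)) :
    IsRotaBaxter C lam := by
  intro x y
  simp only [hC, lie_neg, neg_lie, lie_add, add_lie, lie_smul, smul_lie, map_add, map_neg,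
    map_smul, hB x y]
  module

theorem lie_apply_complement (hB : IsRotaBaxter B lam) (hC : ∀ x, C x = -(B x + lam • x))
    (x y : L) : ⁅B x, C y⁆ = B ⁅x, C y⁆ + C ⁅B x, y⁆ := by
  simp only [hC, lie_neg, lie_add, lie_smul, map_add, map_neg, map_smul, hB x y]
  module

theorem lie_complement_apply (hB : IsRotaBaxter B lam) (hC : ∀ x, C x = -(B x + lam • x))
    (x y : L) : ⁅C x, B y⁆ = C ⁅x, B y⁆ + B ⁅C x, y⁆ := by
  rw [← lie_skew, hB.lie_apply_complement hC, ← lie_skew x, ← lie_skew (C x)]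
  simp only [map_neg]
  abel

theorem diag_coprod (hB : IsRotaBaxter B lam) (hC : ∀ x, C x = -(B x + lam • x)) :
    IsRotaBaxter ((B.coprod C).prod (B.coprod C)) lam := by
  have hR (a b : L × L) : ⁅B a.1 + C a.2, B b.1 + C b.2⁆ =
      B (⁅B a.1 + C a.2, b.1⁆ + ⁅a.1, B b.1 + C b.2⁆ + lam • ⁅a.1, b.1⁆) +
        C (⁅B a.1 + C a.2, b.2⁆ + ⁅a.2, B b.1 + C b.2⁆ + lam • ⁅a.2, b.2⁆) := by
    simp only [lie_add, add_lie, map_add, hB a.1 b.1, (hB.complement hC) a.2 b.2,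
      hB.lie_apply_complement hC, hB.lie_complement_apply hC]
    abel
  exact fun a b => Prod.ext (hR a b) (hR a b)

end IsRotaBaxter

variable {S : L →ₗ[K] L →ₗ[K] K}

theorem eq_zero_of_forall_sub_form_eq_zero (hS : ∀ x : L, (∀ y : L, S x y = 0) → x = 0)
    {a : L × L} (ha : ∀ b : L × L, S a.1 b.1 - S a.2 b.2 = 0) : a = 0 :=
  Prod.ext (hS _ fun y => by simpa using ha (y, 0)) (hS _ fun y => by simpa using ha (0, -y))

theorem sub_form_coprod_add_sub_form_coprod_add_mul_eq_zero {B C : L →ₗ[K] L} {lam : K}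
    (hSB : ∀ x y : L, S x (B y) + S (B x) y + lam * S x y = 0)
    (hC : ∀ x, C x = -(B x + lam • x)) (a b : L × L) :
    (S (B.coprod C a) b.1 - S (B.coprod C a) b.2) + (S a.1 (B.coprod C b) - S a.2 (B.coprod C b)) +
      lam * (S a.1 b.1 - S a.2 b.2) = 0 := by
  simp only [LinearMap.coprod_apply, hC, map_add, map_neg, map_smul, LinearMap.add_apply,
    LinearMap.neg_apply, LinearMap.smul_apply, smul_eq_mul]
  linear_combination hSB a.1 b.1 + hSB a.2 b.2 - hSB a.2 b.1 - hSB a.1 b.2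

end DoubleConstruction

theorem stmt6_general (K g : Type*) [Field K] [LieRing g] [LieAlgebra K g]
    (lam : K) (B : g →ₗ[K] g) (S : g →ₗ[K] g →ₗ[K] K)
    (hB : ∀ x y : g, ⁅B x, B y⁆ = B (⁅B x, y⁆ + ⁅x, B y⁆ + lam • ⁅x, y⁆))
    (hSsymm : ∀ x y : g, S x y = S y x)
    (hSnondeg : ∀ x : g, (∀ y : g, S x y = 0) → x = 0)
    (hSinv : ∀ x y z : g, S ⁅x, y⁆ z + S y ⁅x, z⁆ = 0)
    (hSB : ∀ x y : g, S x (B y) + S (B x) y + lam * S x y = 0)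
    (Bhat : g × g → g × g)
    (hBhat : ∀ a : g × g, Bhat a = (B a.1 - (B a.2 + lam • a.2), B a.1 - (B a.2 + lam • a.2)))
    (Shat : g × g → g × g → K)
    (hShat : ∀ a b : g × g, Shat a b = S a.1 b.1 - S a.2 b.2)
    (τ : g × g → g × g)
    (hτ : ∀ a : g × g, τ a = (a.2, a.1)) :
    -- `B̂` is a Rota–Baxter operator of weight `lam` on `g × g`
    (∀ a b : g × g,
      prodBracket (K := K) (Bhat a) (Bhat b) =
        Bhat (prodBracket (K := K) (Bhat a) b + prodBracket (K := K) a (Bhat b) +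
          lam • prodBracket (K := K) a b)) ∧
    -- `Ŝ` is symmetric
    (∀ a b : g × g, Shat a b = Shat b a) ∧
    -- `Ŝ` is nondegenerate
    (∀ a : g × g, (∀ b : g × g, Shat a b = 0) → a = 0) ∧
    -- `Ŝ` is invariant
    (∀ a b c : g × g, Shat (prodBracket (K := K) a b) c + Shat b (prodBracket (K := K) a c) = 0) ∧
    -- compatibility of `Ŝ` and `B̂`
    (∀ a b : g × g, Shat (Bhat a) b + Shat a (Bhat b) + lam * Shat a b = 0) ∧
    -- the swap `τ` is a Lie algebra automorphism of `g × g`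
    Function.Bijective τ ∧
    (∀ a b : g × g, τ (prodBracket (K := K) a b) = prodBracket (K := K) (τ a) (τ b)) ∧
    -- `(τ − id) ∘ (B̂ + lam·id) ∘ (τ + id) = 0`
    (∀ a : g × g,
      τ (Bhat (τ a + a) + lam • (τ a + a)) - (Bhat (τ a + a) + lam • (τ a + a)) = 0) ∧
    -- `Ŝ(τ a, b) + Ŝ(a, τ b) = 0`
    (∀ a b : g × g, Shat (τ a) b + Shat a (τ b) = 0) := by
  set C : g →ₗ[K] g := -B - lam • LinearMap.id
  have hC (x : g) : C x = -(B x + lam • x) := by simp [C, neg_add_eq_sub]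
  obtain rfl : Bhat = (B.coprod C).prod (B.coprod C) := by
    funext a
    simp [hBhat, hC, sub_eq_add_neg]
  obtain rfl : Shat = fun a b => S a.1 b.1 - S a.2 b.2 := funext₂ hShat
  obtain rfl : τ = Prod.swap := funext hτ
  refine ⟨IsRotaBaxter.diag_coprod hB hC,
    fun a b => by dsimp only; rw [hSsymm a.1, hSsymm a.2],
    fun a => eq_zero_of_forall_sub_form_eq_zero hSnondeg,
    fun a b c => by
      simp only [prodBracket]
      linear_combination hSinv a.1 b.1 c.1 - hSinv a.2 b.2 c.2,
    sub_form_coprod_add_sub_form_coprod_add_mul_eq_zero hSB hC, Prod.swap_bijective,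
    fun a b => rfl, fun a => by simp [add_comm],
    fun a b => by simp only [Prod.fst_swap, Prod.snd_swap]; ring⟩

/-- Let `(g,B,S)` be a quadratic Rota–Baxter Lie algebra of nonzero weight
`lam`. With `B̂(u,x) := (Bu − (B+lam·id)x, Bu − (B+lam·id)x)` and
`Ŝ((u,x),(v,y)) := S(u,v) − S(x,y)`, the triple `(g × g, B̂, Ŝ)` is a quadratic Rota–Baxter
Lie algebra of weight `lam`, and the swap `τ(u,x) := (x,u)` is a reflection on it. -/
theorem stmt6 (K g : Type*) [Field K] [LieRing g] [LieAlgebra K g]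
    (lam : K) (hlam : lam ≠ 0) (B : g →ₗ[K] g) (S : g →ₗ[K] g →ₗ[K] K)
    (hB : ∀ x y : g, ⁅B x, B y⁆ = B (⁅B x, y⁆ + ⁅x, B y⁆ + lam • ⁅x, y⁆))
    (hSsymm : ∀ x y : g, S x y = S y x)
    (hSnondeg : ∀ x : g, (∀ y : g, S x y = 0) → x = 0)
    (hSinv : ∀ x y z : g, S ⁅x, y⁆ z + S y ⁅x, z⁆ = 0)
    (hSB : ∀ x y : g, S x (B y) + S (B x) y + lam * S x y = 0)
    (Bhat : g × g → g × g)
    (hBhat : ∀ a : g × g, Bhat a = (B a.1 - (B a.2 + lam • a.2), B a.1 - (B a.2 + lam • a.2)))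
    (Shat : g × g → g × g → K)
    (hShat : ∀ a b : g × g, Shat a b = S a.1 b.1 - S a.2 b.2)
    (τ : g × g → g × g)
    (hτ : ∀ a : g × g, τ a = (a.2, a.1)) :
    -- `B̂` is a Rota–Baxter operator of weight `lam` on `g × g`
    (∀ a b : g × g,
      prodBracket (K := K) (Bhat a) (Bhat b) =
        Bhat (prodBracket (K := K) (Bhat a) b + prodBracket (K := K) a (Bhat b) +
          lam • prodBracket (K := K) a b)) ∧
    -- `Ŝ` is symmetric
    (∀ a b : g × g, Shat a b = Shat b a) ∧
    -- `Ŝ` is nondegenerate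
    (∀ a : g × g, (∀ b : g × g, Shat a b = 0) → a = 0) ∧
    -- `Ŝ` is invariant
    (∀ a b c : g × g, Shat (prodBracket (K := K) a b) c + Shat b (prodBracket (K := K) a c) = 0) ∧
    -- compatibility of `Ŝ` and `B̂`
    (∀ a b : g × g, Shat (Bhat a) b + Shat a (Bhat b) + lam * Shat a b = 0) ∧
    -- the swap `τ` is a Lie algebra automorphism of `g × g`
    Function.Bijective τ ∧
    (∀ a b : g × g, τ (prodBracket (K := K) a b) = prodBracket (K := K) (τ a) (τ b)) ∧
    -- `(τ − id) ∘ (B̂ + lam·id) ∘ (τ + id) = 0`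
    (∀ a : g × g,
      τ (Bhat (τ a + a) + lam • (τ a + a)) - (Bhat (τ a + a) + lam • (τ a + a)) = 0) ∧
    -- `Ŝ(τ a, b) + Ŝ(a, τ b) = 0`
    (∀ a b : g × g, Shat (τ a) b + Shat a (τ b) = 0) :=
  stmt6_general K g lam B S hB hSsymm hSnondeg hSinv hSB Bhat hBhat Shat hShat τ hτ
end

section
/- Let B be a Rota–Baxter operator of nonzero weight λ on a Lie algebra g over a field. Define r₊, r₋ : g × Dual(g) → g × Dual(g) by r₊(x,ξ) := (λ⁻¹(Bx + λx), −λ⁻¹·ξ∘B) and r₋(x,ξ) := (λ⁻¹Bx, −λ⁻¹(λξ + ξ∘B)), and the coadjoint-type bilinear operation 𝔞(x,ξ)(y,η) := (⁅x,y⁆ − ad*_y ξ, ad*_x η) on g × Dual(g). Then for all a,b ∈ g × Dual(g): 𝔞(r₊ a)(b) − 𝔞(r₋ b)(a) = λ⁻¹ ⁅a,b⁆_{B̃}; moreover ⁅(x,ξ),(y,η)⁆_{B̃} = (⁅x,y⁆_B, ρ_B(x)η − ρ_B(y)ξ), where ⁅x,y⁆_B := ⁅Bx,y⁆ + ⁅x,By⁆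 + λ⁅x,y⁆ and ρ_B(x)ξ := ad*_{Bx}ξ − ad*_x(ξ∘B). In particular, λ⁻¹·id is a Lie algebra isomorphism from the dual Lie algebra induced by the r-matrix r_B onto the descendent Lie algebra g_B ⋉_{ρ_B} Dual(g). -/
variable {K : Type*} [Field K] {g : Type*} [LieRing g] [LieAlgebra K g]

/-- Coadjoint action `ad*_x ξ = −ξ ∘ (ad x)` on the dual space. -/
noncomputable def coad (x : g) (ξ : Module.Dual K g) : Module.Dual K g :=
  -(ξ ∘ₗ (LieAlgebra.ad K g x : g →ₗ[K] g))

/-- The semidirect bracket `⁅(x,ξ),(y,η)⁆ = (⁅x,y⁆, ad*_x η − ad*_y ξ)` on `g × Dual g`. -/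
noncomputable def sdBracket (a b : g × Module.Dual K g) : g × Module.Dual K g :=
  (⁅a.1, b.1⁆, coad a.1 b.2 - coad b.1 a.2)

/-- The operator `B̃(x,ξ) = (Bx, −lam ξ − ξ∘B)` on `g × Dual g`. -/
noncomputable def Btilde (lam : K) (B : g →ₗ[K] g) (a : g × Module.Dual K g) :
    g × Module.Dual K g :=
  (B a.1, -(lam • a.2) - a.2 ∘ₗ B)

/-- The descendent bracket `⁅a,b⁆_{B̃} = ⁅B̃a,b⁆ + ⁅a,B̃b⁆ + lam•⁅a,b⁆`. -/
noncomputable def descBracket (lam : K) (B : g →ₗ[K] g) (a b : g × Module.Dual K g) :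
    g × Module.Dual K g :=
  sdBracket (Btilde lam B a) b + sdBracket a (Btilde lam B b) + lam • sdBracket a b

/-- `r₊(x,ξ) = (lam⁻¹(Bx + lam x), −lam⁻¹ ξ∘B)`. -/
noncomputable def rplus (lam : K) (B : g →ₗ[K] g) (a : g × Module.Dual K g) :
    g × Module.Dual K g :=
  (lam⁻¹ • (B a.1 + lam • a.1), -(lam⁻¹ • (a.2 ∘ₗ B)))

/-- `r₋(x,ξ) = (lam⁻¹ Bx, −lam⁻¹(lam ξ + ξ∘B))`. -/
noncomputable def rminus (lam : K) (B : g →ₗ[K] g) (a : g × Module.Dual K g) :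
    g × Module.Dual K g :=
  (lam⁻¹ • B a.1, -(lam⁻¹ • (lam • a.2 + a.2 ∘ₗ B)))

/-- The coadjoint-type bilinear operation `𝔞(x,ξ)(y,η)` of `g ⋉ Dual g` on its dual,
identified with `g × Dual g`:  `𝔞𝔡*_x y = ⁅x,y⁆`, `𝔞𝔡*_x η = ad*_x η`,
`𝔞𝔡*_ξ y = −ad*_y ξ`, `𝔞𝔡*_ξ η = 0`. -/
noncomputable def acoad (a b : g × Module.Dual K g) : g × Module.Dual K g :=
  (⁅a.1, b.1⁆, coad a.1 b.2 - coad b.1 a.2)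

/-- `ρ_B(x)ξ = ad*_{Bx} ξ − ad*_x (ξ∘B)`. -/
noncomputable def rhoB (B : g →ₗ[K] g) (x : g) (ξ : Module.Dual K g) : Module.Dual K g :=
  coad (B x) ξ - coad x (ξ ∘ₗ B)

/-!
The map `𝔞` is the semidirect bracket itself, and `r₊ = λ⁻¹ (B̃ + λ)`, `r₋ = λ⁻¹ B̃`. Hence the
first identity is bilinearity and antisymmetry of the semidirect bracket; the second is a
componentwise expansion, using that `ad*_x` is linear in the covector.
-/

lemma coad_add_left (x y : g) (ξ : Module.Dual K g) : coad (x + y) ξ = coad x ξ + coad y ξ := by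
  simp only [coad, map_add, LinearMap.comp_add, neg_add]

lemma coad_smul_left (c : K) (x : g) (ξ : Module.Dual K g) : coad (c • x) ξ = c • coad x ξ := by
  simp only [coad, map_smul, LinearMap.comp_smul, smul_neg]

lemma coad_add_right (x : g) (ξ η : Module.Dual K g) : coad x (ξ + η) = coad x ξ + coad x η := by
  simp only [coad, LinearMap.add_comp, neg_add]

lemma coad_sub_right (x : g) (ξ η : Module.Dual K g) : coad x (ξ - η) = coad x ξ - coad x η := by
  simp only [coad, LinearMap.sub_comp, neg_sub']

lemma coad_smul_right (c : K) (x : g) (ξ : Module.Dual K g) : coad x (c • ξ) = c • coad x ξ := by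
  simp only [coad, LinearMap.smul_comp, smul_neg]

lemma coad_neg_right (x : g) (ξ : Module.Dual K g) : coad x (-ξ) = -coad x ξ := by
  simp only [coad, LinearMap.neg_comp]

lemma sdBracket_swap (a b : g × Module.Dual K g) : sdBracket b a = -sdBracket a b := by
  ext <;> simp [sdBracket]

lemma sdBracket_add_left (a b c : g × Module.Dual K g) :
    sdBracket (a + b) c = sdBracket a c + sdBracket b c := by
  ext : 1
  · exact add_lie a.1 b.1 c.1
  · simp only [sdBracket, Prod.fst_add, Prod.snd_add, coad_add_left, coad_add_right]
    abel

lemma sdBracket_smul_left (c : K) (a b : g × Module.Dual K g) :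
    sdBracket (c • a) b = c • sdBracket a b := by
  ext : 1
  · exact smul_lie c a.1 b.1
  · simp only [sdBracket, Prod.smul_fst, Prod.smul_snd, Prod.smul_mk, coad_smul_left,
      coad_smul_right, smul_sub]

lemma acoad_eq_sdBracket :
    (acoad : g × Module.Dual K g → g × Module.Dual K g → g × Module.Dual K g) = sdBracket :=
  rfl

lemma rplus_eq_smul_Btilde_add (lam : K) (B : g →ₗ[K] g) (a : g × Module.Dual K g) :
    rplus lam B a = lam⁻¹ • (Btilde lam B a + lam • a) := by
  ext : 1
  · simp [rplus, Btilde]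
  · simp only [rplus, Btilde, Prod.smul_snd, Prod.snd_add]
    module

lemma rminus_eq_smul_Btilde (lam : K) (B : g →ₗ[K] g) (a : g × Module.Dual K g) :
    rminus lam B a = lam⁻¹ • Btilde lam B a := by
  ext : 1
  · simp [rminus, Btilde]
  · simp only [rminus, Btilde, Prod.smul_snd]
    module

theorem acoad_rplus_sub_acoad_rminus (lam : K) (B : g →ₗ[K] g) (a b : g × Module.Dual K g) :
    acoad (rplus lam B a) b - acoad (rminus lam B b) a = lam⁻¹ • descBracket lam B a b := by
  rw [acoad_eq_sdBracket, rplus_eq_smul_Btilde_add, rminus_eq_smul_Btilde,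
    sdBracket_smul_left, sdBracket_smul_left, sdBracket_add_left, sdBracket_smul_left,
    sdBracket_swap a (Btilde lam B b), descBracket]
  module

theorem descBracket_mk (lam : K) (B : g →ₗ[K] g) (x y : g) (ξ η : Module.Dual K g) :
    descBracket lam B (x, ξ) (y, η) =
      (⁅B x, y⁆ + ⁅x, B y⁆ + lam • ⁅x, y⁆, rhoB B x η - rhoB B y ξ) := by
  ext : 1
  · rfl
  · simp only [descBracket, sdBracket, Btilde, rhoB, Prod.snd_add, Prod.smul_snd,
      coad_sub_right, coad_neg_right, coad_smul_right]
    module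

theorem stmt9_general (lam : K) (B : g →ₗ[K] g) :
    (∀ a b : g × Module.Dual K g,
      acoad (rplus lam B a) b - acoad (rminus lam B b) a =
        lam⁻¹ • descBracket lam B a b) ∧
    (∀ (x y : g) (ξ η : Module.Dual K g),
      descBracket lam B (x, ξ) (y, η) =
        (⁅B x, y⁆ + ⁅x, B y⁆ + lam • ⁅x, y⁆, rhoB B x η - rhoB B y ξ)) :=
  ⟨acoad_rplus_sub_acoad_rminus lam B, descBracket_mk lam B⟩

/-- For a Rota–Baxter operator `B` of nonzero weight `lam` on `g`:
`𝔞(r₊ a)(b) − 𝔞(r₋ b)(a) = lam⁻¹ • ⁅a,b⁆_{B̃}` for all `a, b ∈ g × Dual g`, and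
`⁅(x,ξ),(y,η)⁆_{B̃} = (⁅x,y⁆_B, ρ_B(x)η − ρ_B(y)ξ)`.  In particular `lam⁻¹·id` is a
Lie algebra isomorphism from the dual Lie algebra induced by the `r`-matrix `r_B`
onto the descendent Lie algebra `g_B ⋉_{ρ_B} Dual g`. -/
theorem stmt9 (lam : K) (hlam : lam ≠ 0) (B : g →ₗ[K] g)
    (hB : ∀ x y : g, ⁅B x, B y⁆ = B (⁅B x, y⁆ + ⁅x, B y⁆ + lam • ⁅x, y⁆)) :
    (∀ a b : g × Module.Dual K g,
      acoad (rplus lam B a) b - acoad (rminus lam B b) a =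
        lam⁻¹ • descBracket lam B a b) ∧
    (∀ (x y : g) (ξ η : Module.Dual K g),
      descBracket lam B (x, ξ) (y, η) =
        (⁅B x, y⁆ + ⁅x, B y⁆ + lam • ⁅x, y⁆, rhoB B x η - rhoB B y ξ)) :=
  stmt9_general lam B
end
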